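/- arXiv:0802.1612 — 8 statements merged into one kernel-verified Lean document; each statement's English description precedes it below -/
import Mathlib

section
/- Let n be a positive integer and let B, C be real n×n matrices such that C is symmetric and positive definite and C·Bᵀ = B·C. Then the complex n×n matrix Π := C⁻¹·(i·I − B) is symmetric (Πᵀ = Π), its imaginary part equals C⁻¹, and C⁻¹ is symmetric positive definite; in particular Π is a symmetric complex matrix with positive definite imaginary part. -/
open Matrix Complex

theorem discrete_period_matrix_symmetric_posdef_imaginary_part {n : ℕ} (hn : 0 < n)
    (B C : Matrix (Fin n) (Fin n) ℝ)
    (hC : C.IsSymm) (hCpos : C.PosDef) (hBC : C * Bᵀ = B * C)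
    (P : Matrix (Fin n) (Fin n) ℂ)
    (hP : P = (C⁻¹.map (Complex.ofReal)) *
      (Complex.I • (1 : Matrix (Fin n) (Fin n) ℂ) - B.map (Complex.ofReal))) :
    Pᵀ = P ∧ (fun i j => (P i j).im) = C⁻¹ ∧ (C⁻¹).IsSymm ∧ (C⁻¹).PosDef := by
  have hCunit : IsUnit C.det := isUnit_iff_ne_zero.2 hCpos.det_pos.ne'
  have hCinvsymm : (C⁻¹).IsSymm := by
    rw [Matrix.IsSymm, Matrix.transpose_nonsing_inv, hC.eq]
  have hCC : C⁻¹ * C = 1 := Matrix.nonsing_inv_mul C hCunit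
  have hCC' : C * C⁻¹ = 1 := Matrix.mul_nonsing_inv C hCunit
  -- key commutation: Bᵀ * C⁻¹ = C⁻¹ * B
  have hkey : Bᵀ * C⁻¹ = C⁻¹ * B := by
    have h1 : C⁻¹ * (C * Bᵀ) = C⁻¹ * (B * C) := by rw [hBC]
    have h2 : Bᵀ = C⁻¹ * (B * C) := by rwa [← Matrix.mul_assoc, hCC, Matrix.one_mul] at h1
    rw [h2, Matrix.mul_assoc, Matrix.mul_assoc, hCC', Matrix.mul_one]
  have hkey2 : (C⁻¹ * B).IsSymm := by
    rw [Matrix.IsSymm, Matrix.transpose_mul, hCinvsymm.eq, hkey]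
  have hmap : (C⁻¹ * B).map Complex.ofReal
      = C⁻¹.map Complex.ofReal * B.map Complex.ofReal := by
    ext i j
    simp [Matrix.mul_apply, Matrix.map_apply]
  have hPform : P = Complex.I • (C⁻¹.map Complex.ofReal) - (C⁻¹ * B).map Complex.ofReal := by
    rw [hP, Matrix.mul_sub, Matrix.mul_smul, Matrix.mul_one, hmap]
  constructor
  · rw [hPform]
    simp only [Matrix.transpose_sub, Matrix.transpose_smul]
    rw [← Matrix.transpose_map, ← Matrix.transpose_map, hCinvsymm.eq, hkey2.eq]
  refine ⟨?_, hCinvsymm, hCpos.inv⟩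
  funext i j
  rw [hPform]
  simp [Matrix.sub_apply, Matrix.smul_apply, Matrix.map_apply]
end

section
/- Let x, y, x', y' be complex numbers with x ≠ y' and x' ≠ y, and let w_x, w_y, w_{x'}, w_{y'} be nonzero complex numbers solving the Hirota system on the face (x, y, x', y'): (y−x)·w_x·w_y + (x−y')·w_{y'}·w_x + (y'−x')·w_{x'}·w_{y'} + (x'−y)·w_y·w_{x'} = 0. Then: (i) the four edge increments (y−x)w_xw_y, (x'−y)w_yw_{x'}, (y'−x')w_{x'}w_{y'}, (x−y')w_{y'}w_x sum to zero, so there exist complex numbers f_x, f_y, f_{x'}, f_{y'} (unique up to a common additive constant) with f_y − f_x = (y−x)w_xw_y, f_{x'} − f_y = (x'−y)w_yw_{x'}, f_{y'} − f_{x'} = (y'−x')w_{x'}w_{y'}, f_x − f_{y'} = (x−y')w_{y'}w_x; and (ii) any such values are quadratic holomorphic, i.e. ((f_y − f_x)(f_{y'} − f_{x'})) / ((f_x − f_{y'})(f_{x'} − f_y)) = ((y−x)(y'−x')) / ((x−y')(x'−y)), both denominators being nonzero. -/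
open Complex

theorem hirota_gives_cross_ratio_preserving
    (x y x' y' : ℂ) (hxy' : x ≠ y') (hx'y : x' ≠ y)
    (wx wy wx' wy' : ℂ)
    (hwx : wx ≠ 0) (hwy : wy ≠ 0) (hwx' : wx' ≠ 0) (hwy' : wy' ≠ 0)
    (hHirota : (y - x) * wx * wy + (x - y') * wy' * wx +
      (y' - x') * wx' * wy' + (x' - y) * wy * wx' = 0) :
    -- (i) the four edge increments sum to zero,
    ((y - x) * wx * wy + (x' - y) * wy * wx' +
      (y' - x') * wx' * wy' + (x - y') * wy' * wx = 0) ∧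
    -- so there exist values f with the prescribed increments,
    (∃ fx fy fx' fy' : ℂ,
      fy - fx = (y - x) * wx * wy ∧ fx' - fy = (x' - y) * wy * wx' ∧
      fy' - fx' = (y' - x') * wx' * wy' ∧ fx - fy' = (x - y') * wy' * wx) ∧
    -- unique up to a common additive constant,
    (∀ fx fy fx' fy' gx gy gx' gy' : ℂ,
      (fy - fx = (y - x) * wx * wy ∧ fx' - fy = (x' - y) * wy * wx' ∧
        fy' - fx' = (y' - x') * wx' * wy' ∧ fx - fy' = (x - y') * wy' * wx) →
      (gy - gx = (y - x) * wx * wy ∧ gx' - gy = (x' - y) * wy * wx' ∧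
        gy' - gx' = (y' - x') * wx' * wy' ∧ gx - gy' = (x - y') * wy' * wx) →
      ∃ c : ℂ, gx = fx + c ∧ gy = fy + c ∧ gx' = fx' + c ∧ gy' = fy' + c) ∧
    -- (ii) any such values are quadratic holomorphic (cross-ratio preserving)
    (∀ fx fy fx' fy' : ℂ,
      (fy - fx = (y - x) * wx * wy ∧ fx' - fy = (x' - y) * wy * wx' ∧
        fy' - fx' = (y' - x') * wx' * wy' ∧ fx - fy' = (x - y') * wy' * wx) →
      (fx - fy') * (fx' - fy) ≠ 0 ∧ (x - y') * (x' - y) ≠ 0 ∧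
      ((fy - fx) * (fy' - fx')) / ((fx - fy') * (fx' - fy)) =
        ((y - x) * (y' - x')) / ((x - y') * (x' - y))) := by

  have hxy'0 : x - y' ≠ 0 := sub_ne_zero.mpr hxy'
  have hx'y0 : x' - y ≠ 0 := sub_ne_zero.mpr hx'y
  refine ⟨by linear_combination hHirota, ?_, ?_, ?_⟩
  · exact ⟨0, (y - x) * wx * wy,
      (y - x) * wx * wy + (x' - y) * wy * wx',
      (y - x) * wx * wy + (x' - y) * wy * wx' + (y' - x') * wx' * wy',
      by ring, by ring, by ring, by linear_combination -hHirota⟩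
  · rintro fx fy fx' fy' gx gy gx' gy' ⟨h1, h2, h3, h4⟩ ⟨g1, g2, g3, g4⟩
    exact ⟨gx - fx, by ring, by linear_combination g1 - h1,
      by linear_combination g1 - h1 + g2 - h2,
      by linear_combination g1 - h1 + g2 - h2 + g3 - h3⟩
  · rintro fx fy fx' fy' ⟨h1, h2, h3, h4⟩
    have d1 : fx - fy' ≠ 0 := by
      rw [h4]; exact mul_ne_zero (mul_ne_zero hxy'0 hwy') hwx
    have d2 : fx' - fy ≠ 0 := by
      rw [h2]; exact mul_ne_zero (mul_ne_zero hx'y0 hwy) hwx'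
    refine ⟨mul_ne_zero d1 d2, mul_ne_zero hxy'0 hx'y0, ?_⟩
    rw [h1, h2, h3, h4]
    field_simp
end

section
/- Let x, y, x', y' be complex numbers and let w_x, w_y, w_{x'}, w_{y'} be complex numbers solving the Hirota system on the face (x, y, x', y'): (y−x)w_xw_y + (x−y')w_{y'}w_x + (y'−x')w_{x'}w_{y'} + (x'−y)w_yw_{x'} = 0. Suppose g_x, g_y, g_{x'}, g_{y'} are complex numbers satisfying the linearized Hirota relation (g_x+g_y)(y−x)w_xw_y + (g_y+g_{x'})(x'−y)w_yw_{x'} + (g_{x'}+g_{y'})(y'−x')w_{x'}w_{y'} + (g_{y'}+g_x)(x−y')w_{y'}w_x = 0. Then, with f the associated cross-ratio preserving values (f_y − f_x = (y−x)w_xw_y, f_{x'} − f_y = (x'−y)w_yw_{x'}, f_{y'} − f_{x'} = (y'−x')w_{x'}w_{y'}), one has (g_{x'} − g_x)·(f_{y'} − f_y) = (g_{y'} − g_y)·(f_{x'} − f_x); that is, the logarithmic derivative g of the Hirota system is a diagonal ratio preserving map with respect to f. -/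
open Complex

theorem hirota_logarithmic_derivative_is_diagonal_ratio_preserving
    (x y x' y' : ℂ) (wx wy wx' wy' : ℂ)
    (hHirota : (y - x) * wx * wy + (x - y') * wy' * wx +
      (y' - x') * wx' * wy' + (x' - y) * wy * wx' = 0)
    (gx gy gx' gy' : ℂ)
    (hlin : (gx + gy) * ((y - x) * wx * wy) +
      (gy + gx') * ((x' - y) * wy * wx') +
      (gx' + gy') * ((y' - x') * wx' * wy') +
      (gy' + gx) * ((x - y') * wy' * wx) = 0)
    (fx fy fx' fy' : ℂ)
    (hf1 : fy - fx = (y - x) * wx * wy)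
    (hf2 : fx' - fy = (x' - y) * wy * wx')
    (hf3 : fy' - fx' = (y' - x') * wx' * wy') :
    (gx' - gx) * (fy' - fy) = (gy' - gy) * (fx' - fx) := by
  linear_combination hlin - (gy' + gx) * hHirota + (gx' - gx) * hf3 + (gx' - gx + gy - gy') * hf2 + (gy - gy') * hf1
end

section
/- In the abstract critical-map setup, for every vertex x, every natural number k, and every real α > 1, one has |P k x| / k! ≤ ((α+1)/(α−1))^{d(x,O)} · (α·δ/2)^k, where d(x,O) is the combinatorial (graph) distance from x to the base vertex O. -/
/-!
Write `p k x = ‖P k x‖ / k!`. Dividing the recurrence by `k!` and taking norms gives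
`p (k+1) x ≤ p (k+1) y + (δ/2) (p k y + p k x)` along every edge, so a bound of the form
`C ^ d(x,O) * A ^ k` propagates by induction on `k` and then on `d(x,O)`, stepping from `x` to a
neighbour `y` one step closer to `O`, as soon as `A + (δ/2)(1 + C) ≤ C A`. For
`C = (α+1)/(α-1)` and `A = αδ/2` this holds with equality.
-/

open Nat

namespace SimpleGraph

variable {V : Type*} {G : SimpleGraph V} {x O : V} {n : ℕ}

lemma Reachable.exists_adj_dist_eq_of_dist_eq_succ (h : G.Reachable x O)
    (hx : G.dist x O = n + 1) : ∃ y, G.Adj x y ∧ G.dist y O = n := by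
  obtain ⟨p, hp⟩ := h.exists_walk_length_eq_dist
  cases p with
  | nil => simp at hx
  | @cons _ y _ hadj q =>
    refine ⟨y, hadj, le_antisymm ?_ ?_⟩
    · have : q.length = n := by simp only [Walk.length_cons] at hp; omega
      exact this ▸ dist_le q
    · have := hadj.reachable.dist_triangle_left O
      rw [dist_eq_one_iff_adj.mpr hadj] at this
      omega

theorem le_pow_dist_mul_pow_of_adj_le {p : ℕ → V → ℝ} {c C A : ℝ} (hc : 0 ≤ c) (hC : 1 ≤ C)
    (hA : 0 ≤ A) (hCA : A + c * (1 + C) ≤ C * A) (h0 : ∀ v, p 0 v ≤ 1)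
    (hO : ∀ k, p (k + 1) O ≤ 0)
    (hstep : ∀ k x y, G.Adj x y → p (k + 1) x ≤ p (k + 1) y + c * (p k y + p k x))
    (k : ℕ) (hx : G.Reachable x O) : p k x ≤ C ^ G.dist x O * A ^ k := by
  induction k generalizing x with
  | zero => simpa using (h0 x).trans (one_le_pow₀ hC)
  | succ k ihk =>
    suffices ∀ n x, G.Reachable x O → G.dist x O = n → p (k + 1) x ≤ C ^ n * A ^ (k + 1) from
      this _ x hx rfl
    intro n
    induction n with
    | zero =>
      intro x hx hd
      rw [hx.dist_eq_zero_iff.mp hd]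
      exact (hO k).trans (by positivity)
    | succ n ihn =>
      intro x hx hd
      obtain ⟨y, hxy, hy⟩ := hx.exists_adj_dist_eq_of_dist_eq_succ hd
      have hyO : G.Reachable y O := hxy.symm.reachable.trans hx
      have hy₁ := ihn y hyO hy
      have hy₀ := ihk hyO
      have hx₀ := ihk hx
      rw [hy] at hy₀
      rw [hd] at hx₀
      have hCn : 0 ≤ C ^ n * A ^ k := by positivity
      calc p (k + 1) x ≤ p (k + 1) y + c * (p k y + p k x) := hstep k x y hxy
        _ ≤ C ^ n * A ^ (k + 1) + c * (C ^ n * A ^ k + C ^ (n + 1) * A ^ k) := by gcongr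
        _ = C ^ n * A ^ k * (A + c * (1 + C)) := by ring
        _ ≤ C ^ n * A ^ k * (C * A) := by gcongr
        _ = C ^ (n + 1) * A ^ (k + 1) := by ring

end SimpleGraph

lemma norm_div_factorial_le_of_eq_add {𝕜 : Type*} [RCLike 𝕜] {k : ℕ} {a b a' b' w : 𝕜}
    (h : b' = a' + ((k + 1 : ℕ) : 𝕜) * (a + b) * w / 2) :
    ‖b'‖ / (k + 1)! ≤ ‖a'‖ / (k + 1)! + ‖w‖ / 2 * (‖a‖ / k ! + ‖b‖ / k !) := by
  have hnorm : ‖((k + 1 : ℕ) : 𝕜) * (a + b) * w / 2‖ = (k + 1) * ‖a + b‖ * ‖w‖ / 2 := by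
    rw [norm_div, norm_mul, norm_mul, RCLike.norm_natCast, RCLike.norm_two]
    push_cast
    ring
  calc ‖b'‖ / (k + 1)! ≤ (‖a'‖ + (k + 1) * (‖a‖ + ‖b‖) * ‖w‖ / 2) / (k + 1)! := by
        rw [h]
        gcongr
        refine (norm_add_le _ _).trans ?_
        rw [hnorm]
        gcongr
        exact norm_add_le _ _
    _ = ‖a'‖ / (k + 1)! + ‖w‖ / 2 * (‖a‖ / k ! + ‖b‖ / k !) := by
        rw [Nat.factorial_succ]
        push_cast
        field_simp

lemma add_div_sub_mul_eq {α δ : ℝ} (hα : α ≠ 1) :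
    (α + 1) / (α - 1) * (α * δ / 2) = α * δ / 2 + δ / 2 * (1 + (α + 1) / (α - 1)) := by
  have : α - 1 ≠ 0 := sub_ne_zero.mpr hα
  field_simp
  ring

theorem discrete_monomial_growth_estimate_general
    {V : Type*} (G : SimpleGraph V) (hG : G.Connected)
    (O : V) (δ : ℝ) (hδ : 0 < δ)
    (Z : V → ℂ)
    (hZ : ∀ x y : V, G.Adj x y → ‖Z y - Z x‖ = δ)
    (P : ℕ → V → ℂ)
    (hP0 : ∀ v : V, P 0 v = 1)
    (hPO : ∀ k : ℕ, 1 ≤ k → P k O = 0)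
    (hPrec : ∀ k : ℕ, 1 ≤ k → ∀ x y : V, G.Adj x y →
      P k y = P k x + (k : ℂ) * (P (k - 1) x + P (k - 1) y) * (Z y - Z x) / 2)
    (x : V) (k : ℕ) (α : ℝ) (hα : 1 < α) :
    ‖P k x‖ / (Nat.factorial k : ℝ) ≤
      ((α + 1) / (α - 1)) ^ (G.dist x O) * (α * δ / 2) ^ k := by
  have hC : 1 ≤ (α + 1) / (α - 1) := by
    rw [le_div_iff₀ (by linarith)]
    linarith
  refine SimpleGraph.le_pow_dist_mul_pow_of_adj_le (p := fun k v ↦ ‖P k v‖ / k !)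
    (by positivity) hC (by positivity) (add_div_sub_mul_eq hα.ne').ge
    (fun v ↦ by simp [hP0]) (fun k ↦ by simp [hPO]) (fun k x y hxy ↦ ?_) k (hG x O)
  have h := norm_div_factorial_le_of_eq_add (hPrec (k + 1) (by omega) y x hxy.symm)
  rwa [Nat.add_sub_cancel, hZ y x hxy.symm] at h

theorem discrete_monomial_growth_estimate
    {V : Type*} (G : SimpleGraph V) (hG : G.Connected)
    (O : V) (δ : ℝ) (hδ : 0 < δ)
    (Z : V → ℂ) (hZO : Z O = 0)
    (hZ : ∀ x y : V, G.Adj x y → ‖Z y - Z x‖ = δ)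
    (P : ℕ → V → ℂ)
    (hP0 : ∀ v : V, P 0 v = 1)
    (hPO : ∀ k : ℕ, 1 ≤ k → P k O = 0)
    (hPrec : ∀ k : ℕ, 1 ≤ k → ∀ x y : V, G.Adj x y →
      P k y = P k x + (k : ℂ) * (P (k - 1) x + P (k - 1) y) * (Z y - Z x) / 2)
    (x : V) (k : ℕ) (α : ℝ) (hα : 1 < α) :
    ‖P k x‖ / (Nat.factorial k : ℝ) ≤
      ((α + 1) / (α - 1)) ^ (G.dist x O) * (α * δ / 2) ^ k :=
  discrete_monomial_growth_estimate_general G hG O δ hδ Z hZ P hP0 hPO hPrec x k α hα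
end

section
/- In the abstract critical-map setup, for every vertex x and every complex number λ with |λ| < 2/δ, the series Σ_{k=0}^∞ λ^k · P k x / k! is absolutely convergent (the function k ↦ ‖λ^k · P k x / k!‖ is summable). -/
/-!
Put `c = δ / 2` and `a k v = ‖P k v‖ / (k! c^k)`. Along an edge `x ~ y` the recursion gives
`a (k+1) y ≤ a (k+1) x + a k x + a k y`, so a polynomial bound in `k` at `x` yields, by Pascal's
rule, a polynomial bound of one degree more at `y`. Following a walk of length `n` from `x` to the
base vertex, where `a k O ≤ 1`, gives `a k x ≤ 3^n (k+n).choose n`, and then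
`‖λ^k P k x / k!‖ ≤ 3^n (k+n).choose n (‖λ‖ c)^k` is summable as soon as `‖λ‖ c < 1`.
-/

open Complex

open Nat in
theorem le_three_mul_choose_succ {a b : ℕ → ℝ} {M : ℝ} {n : ℕ} (hM : 0 ≤ M)
    (ha : ∀ k, a k ≤ M * (k + n).choose n) (hb₀ : b 0 ≤ a 0)
    (hb : ∀ k, b (k + 1) ≤ a (k + 1) + a k + b k) (k : ℕ) :
    b k ≤ 3 * M * (k + (n + 1)).choose (n + 1) := by
  induction k with
  | zero => simpa using hb₀.trans ((ha 0).trans (by simp; linarith))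
  | succ k ih =>
    have hpascal : (k + 1 + (n + 1)).choose (n + 1) =
        (k + 1 + n).choose n + (k + (n + 1)).choose (n + 1) := by
      rw [show k + 1 + (n + 1) = k + 1 + n + 1 by omega, choose_succ_succ',
        show k + 1 + n = k + (n + 1) by omega]
    have hmono : ((k + n).choose n : ℝ) ≤ (k + 1 + n).choose n := by
      exact_mod_cast choose_le_choose n (by omega)
    rw [hpascal]
    push_cast
    have : 0 ≤ M * (k + 1 + n).choose n := by positivity
    linarith [hb k, ha (k + 1), ha k, mul_le_mul_of_nonneg_left hmono hM]

noncomputable def normalizedNorm {E : Type*} [Norm E] (c : ℝ) (p : ℕ → E) (k : ℕ) : ℝ :=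
  ‖p k‖ / (k.factorial * c ^ k)

theorem summable_norm_pow_mul_div_factorial {𝕜 : Type*} [RCLike 𝕜] {p : ℕ → 𝕜} {c M : ℝ}
    {n : ℕ} (hc : 0 < c) (hp : ∀ k, normalizedNorm c p k ≤ M * (k + n).choose n) {lam : 𝕜}
    (hlam : ‖lam‖ * c < 1) :
    Summable fun k => ‖lam ^ k * p k / (k.factorial : 𝕜)‖ := by
  have hr : ‖‖lam‖ * c‖ < 1 := by rwa [Real.norm_of_nonneg (by positivity)]
  refine .of_nonneg_of_le (fun _ => norm_nonneg _) (fun k => ?_)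
    ((summable_choose_mul_geometric_of_norm_lt_one n hr).mul_left M)
  have hk : ‖lam ^ k * p k / (k.factorial : 𝕜)‖ = (‖lam‖ * c) ^ k * normalizedNorm c p k := by
    rw [normalizedNorm, norm_div, norm_mul, norm_pow, RCLike.norm_natCast]
    field_simp
    ring
  calc _ = (‖lam‖ * c) ^ k * normalizedNorm c p k := hk
    _ ≤ (‖lam‖ * c) ^ k * (M * (k + n).choose n) := by gcongr; exact hp k
    _ = _ := by ring

section CriticalMap

variable {V : Type*} {G : SimpleGraph V} {δ : ℝ} {Z : V → ℂ} {P : ℕ → V → ℂ}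

theorem norm_succ_le_of_adj (hZ : ∀ x y : V, G.Adj x y → ‖Z y - Z x‖ = δ)
    (hPrec : ∀ k : ℕ, 1 ≤ k → ∀ x y : V, G.Adj x y →
      P k y = P k x + (k : ℂ) * (P (k - 1) x + P (k - 1) y) * (Z y - Z x) / 2)
    {x y : V} (hxy : G.Adj x y) (k : ℕ) :
    ‖P (k + 1) y‖ ≤ ‖P (k + 1) x‖ + (k + 1) * (‖P k x‖ + ‖P k y‖) * (δ / 2) := by
  rw [hPrec (k + 1) le_add_self x y hxy, Nat.add_sub_cancel, ← hZ x y hxy]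
  calc _ ≤ ‖P (k + 1) x‖ + ‖((k + 1 : ℕ) : ℂ) * (P k x + P k y) * (Z y - Z x) / 2‖ :=
        norm_add_le _ _
    _ ≤ _ := by
      rw [norm_div, norm_mul, norm_mul, Complex.norm_natCast, Complex.norm_two, mul_div_assoc]
      push_cast
      gcongr
      exact norm_add_le _ _

theorem normalizedNorm_succ_le_of_adj (hδ : 0 < δ) (hZ : ∀ x y : V, G.Adj x y → ‖Z y - Z x‖ = δ)
    (hPrec : ∀ k : ℕ, 1 ≤ k → ∀ x y : V, G.Adj x y →
      P k y = P k x + (k : ℂ) * (P (k - 1) x + P (k - 1) y) * (Z y - Z x) / 2)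
    {x y : V} (hxy : G.Adj x y) (k : ℕ) :
    normalizedNorm (δ / 2) (P · y) (k + 1) ≤ normalizedNorm (δ / 2) (P · x) (k + 1) +
      normalizedNorm (δ / 2) (P · x) k + normalizedNorm (δ / 2) (P · y) k := by
  have hc : 0 < δ / 2 := half_pos hδ
  simp only [normalizedNorm]
  calc _ ≤ (‖P (k + 1) x‖ + (k + 1) * (‖P k x‖ + ‖P k y‖) * (δ / 2)) /
          ((k + 1).factorial * (δ / 2) ^ (k + 1)) := by
        gcongr
        exact norm_succ_le_of_adj hZ hPrec hxy k
    _ = _ := by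
      rw [Nat.factorial_succ]
      push_cast
      field_simp
      ring

theorem normalizedNorm_le_of_walk {O : V} (hδ : 0 < δ)
    (hZ : ∀ x y : V, G.Adj x y → ‖Z y - Z x‖ = δ)
    (hP0 : ∀ v : V, P 0 v = 1) (hPO : ∀ k : ℕ, 1 ≤ k → P k O = 0)
    (hPrec : ∀ k : ℕ, 1 ≤ k → ∀ x y : V, G.Adj x y →
      P k y = P k x + (k : ℂ) * (P (k - 1) x + P (k - 1) y) * (Z y - Z x) / 2)
    {v : V} (w : G.Walk v O) :
    ∀ k, normalizedNorm (δ / 2) (P · v) k ≤ 3 ^ w.length * (k + w.length).choose w.length := by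
  induction w with
  | nil =>
    rintro (_ | k)
    · simp [normalizedNorm, hP0]
    · simp [normalizedNorm, hPO]
  | cons hvu p ih =>
    intro k
    rw [SimpleGraph.Walk.length_cons, pow_succ']
    exact le_three_mul_choose_succ (by positivity) (ih hPO) (by simp [normalizedNorm, hP0])
      (normalizedNorm_succ_le_of_adj hδ hZ hPrec hvu.symm) k

end CriticalMap

theorem discrete_exponential_series_absolutely_convergent_general
    {V : Type*} (G : SimpleGraph V) (hG : G.Connected)
    (O : V) (δ : ℝ) (hδ : 0 < δ)
    (Z : V → ℂ)
    (hZ : ∀ x y : V, G.Adj x y → ‖Z y - Z x‖ = δ)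
    (P : ℕ → V → ℂ)
    (hP0 : ∀ v : V, P 0 v = 1)
    (hPO : ∀ k : ℕ, 1 ≤ k → P k O = 0)
    (hPrec : ∀ k : ℕ, 1 ≤ k → ∀ x y : V, G.Adj x y →
      P k y = P k x + (k : ℂ) * (P (k - 1) x + P (k - 1) y) * (Z y - Z x) / 2)
    (x : V) (lam : ℂ) (hlam : ‖lam‖ < 2 / δ) :
    Summable (fun k : ℕ => ‖lam ^ k * P k x / (Nat.factorial k : ℂ)‖) := by
  obtain ⟨w⟩ := hG.preconnected x O
  refine summable_norm_pow_mul_div_factorial (half_pos hδ)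
    (normalizedNorm_le_of_walk hδ hZ hP0 hPO hPrec w) ?_
  rw [lt_div_iff₀ hδ] at hlam
  linarith

theorem discrete_exponential_series_absolutely_convergent
    {V : Type*} (G : SimpleGraph V) (hG : G.Connected)
    (O : V) (δ : ℝ) (hδ : 0 < δ)
    (Z : V → ℂ) (hZO : Z O = 0)
    (hZ : ∀ x y : V, G.Adj x y → ‖Z y - Z x‖ = δ)
    (P : ℕ → V → ℂ)
    (hP0 : ∀ v : V, P 0 v = 1)
    (hPO : ∀ k : ℕ, 1 ≤ k → P k O = 0)
    (hPrec : ∀ k : ℕ, 1 ≤ k → ∀ x y : V, G.Adj x y →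
      P k y = P k x + (k : ℂ) * (P (k - 1) x + P (k - 1) y) * (Z y - Z x) / 2)
    (x : V) (lam : ℂ) (hlam : ‖lam‖ < 2 / δ) :
    Summable (fun k : ℕ => ‖lam ^ k * P k x / (Nat.factorial k : ℂ)‖) :=
  discrete_exponential_series_absolutely_convergent_general G hG O δ hδ Z hZ P hP0 hPO hPrec x lam
    hlam
end

section
/- In the abstract critical-map setup, let λ be a complex number with |λ| < 2/δ, let x be a vertex, and let O = v₀, v₁, …, v_n = x be a walk in G (each consecutive pair adjacent). Then Σ_{k=0}^∞ λ^k · P k x / k! = Π_{j=0}^{n−1} (1 + λ·(Z v_{j+1} − Z v_j)/2) / (1 − λ·(Z v_{j+1} − Z v_j)/2), all the denominators being nonzero; in particular the value of the product on the right-hand side is independent of the chosen walk from O to x, and equals the discrete exponential exp(:λ: x). -/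
/-!
Along an edge `x → y` put `w = λ (Z y - Z x) / 2`, `a_k = λᵏ P_k(x) / k!` and
`b_k = λᵏ P_k(y) / k!`. The defining recurrence of the discrete monomials becomes
`b_{k+1} = a_{k+1} + w (a_k + b_k)`, so `a + b` solves a first-order linear recurrence with
forcing term `2a`. Since `|w| < 1` when `|λ| < 2/δ`, `a + b` is the Cauchy product of `2a` with
the geometric series of `w`, whence `∑ b = (2/(1 - w) - 1) ∑ a = (1 + w)/(1 - w) · ∑ a`.
Induction along the walk gives the product.
-/

open Finset
open scoped Nat

section LinearRecurrence

theorem eq_sum_antidiagonal_of_succ_eq_mul_add {R : Type*} [CommSemiring R] {E D : ℕ → R}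
    {w : R} (h0 : E 0 = D 0) (hsucc : ∀ k, E (k + 1) = w * E k + D (k + 1)) (k : ℕ) :
    E k = ∑ p ∈ antidiagonal k, D p.1 * w ^ p.2 := by
  induction k with
  | zero => simp [h0]
  | succ k ih =>
    rw [hsucc, ih, Nat.sum_antidiagonal_succ', mul_sum, add_comm]
    simp only [pow_zero, mul_one, pow_succ]
    congr 1
    exact sum_congr rfl fun p _ => by ring

variable {𝕜 : Type*} [NormedField 𝕜]

theorem one_sub_ne_zero_of_norm_lt_one {w : 𝕜} (hw : ‖w‖ < 1) : 1 - w ≠ 0 :=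
  sub_ne_zero.mpr fun h => by simp [← h] at hw

variable [CompleteSpace 𝕜]

theorem summable_norm_and_tsum_eq_of_succ_eq_mul_add {E D : ℕ → 𝕜} {w : 𝕜}
    (hw : ‖w‖ < 1) (hD : Summable (‖D ·‖)) (h0 : E 0 = D 0)
    (hsucc : ∀ k, E (k + 1) = w * E k + D (k + 1)) :
    Summable (‖E ·‖) ∧ ∑' k, E k = (∑' k, D k) * (1 - w)⁻¹ := by
  have hgeom := summable_norm_geometric_of_norm_lt_one hw
  obtain rfl : E = fun k => ∑ p ∈ antidiagonal k, D p.1 * w ^ p.2 :=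
    funext (eq_sum_antidiagonal_of_succ_eq_mul_add h0 hsucc)
  refine ⟨summable_norm_sum_mul_antidiagonal_of_summable_norm hD hgeom, ?_⟩
  rw [← tsum_geometric_of_norm_lt_one hw,
    tsum_mul_tsum_eq_tsum_sum_antidiagonal_of_summable_norm hD hgeom]

theorem summable_norm_and_tsum_eq_of_succ_eq_add_mul_add {A B : ℕ → 𝕜} {w : 𝕜}
    (hw : ‖w‖ < 1) (hA : Summable (‖A ·‖)) (h0 : B 0 = A 0)
    (hsucc : ∀ k, B (k + 1) = A (k + 1) + w * (A k + B k)) :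
    Summable (‖B ·‖) ∧ ∑' k, B k = (∑' k, A k) * ((1 + w) / (1 - w)) := by
  have h2A : Summable (‖2 * A ·‖) := by
    simpa only [norm_mul] using hA.mul_left ‖(2 : 𝕜)‖
  obtain ⟨hAB, htsum⟩ := summable_norm_and_tsum_eq_of_succ_eq_mul_add (E := A + B) hw h2A
    (by simp [h0, two_mul]) (fun k => by simp only [Pi.add_apply, hsucc]; ring)
  have hB : Summable (‖B ·‖) := (hAB.add hA).of_nonneg_of_le (fun _ => norm_nonneg _)
    fun k => by simpa using norm_sub_le (A k + B k) (A k)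
  refine ⟨hB, ?_⟩
  rw [Pi.add_def, hA.of_norm.tsum_add hB.of_norm, tsum_mul_left] at htsum
  have hden := one_sub_ne_zero_of_norm_lt_one hw
  rw [eq_sub_of_add_eq' htsum]
  field_simp
  ring

end LinearRecurrence

section DiscreteExponential

variable {𝕜 : Type*} {V : Type*}

def expSeriesTerm [DivisionRing 𝕜] (P : ℕ → V → 𝕜) (lam : 𝕜) (x : V) (k : ℕ) :
    𝕜 :=
  lam ^ k * P k x / k !

theorem expSeriesTerm_eq_ite [DivisionRing 𝕜] {P : ℕ → V → 𝕜} {O : V}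
    (hP0 : P 0 O = 1) (hPO : ∀ k, P (k + 1) O = 0) (lam : 𝕜) :
    expSeriesTerm P lam O = fun k => if k = 0 then 1 else 0 := by
  funext k
  cases k <;> simp [expSeriesTerm, hP0, hPO]

theorem expSeriesTerm_succ [Field 𝕜] [CharZero 𝕜] {P : ℕ → V → 𝕜} {x y : V} {d : 𝕜}
    {k : ℕ} (h : P (k + 1) y = P (k + 1) x + (k + 1) * (P k x + P k y) * d / 2) (lam : 𝕜) :
    expSeriesTerm P lam y (k + 1) = expSeriesTerm P lam x (k + 1) +
      lam * d / 2 * (expSeriesTerm P lam x k + expSeriesTerm P lam y k) := by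
  simp only [expSeriesTerm, h, Nat.factorial_succ, Nat.cast_mul, Nat.cast_succ]
  field_simp
  ring

variable [NormedField 𝕜] [CompleteSpace 𝕜] [CharZero 𝕜] (G : SimpleGraph V)
  {P : ℕ → V → 𝕜} {Z : V → 𝕜} {O : V} {lam : 𝕜}

theorem summable_norm_expSeriesTerm_and_tsum_eq_prod (hP0 : ∀ v, P 0 v = 1)
    (hPO : ∀ k, P (k + 1) O = 0)
    (hPrec : ∀ k x y, G.Adj x y →
      P (k + 1) y = P (k + 1) x + (k + 1) * (P k x + P k y) * (Z y - Z x) / 2) :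
    ∀ (n : ℕ) (v : Fin (n + 1) → V), v 0 = O →
      (∀ j : Fin n, G.Adj (v j.castSucc) (v j.succ)) →
      (∀ j : Fin n, ‖lam * (Z (v j.succ) - Z (v j.castSucc)) / 2‖ < 1) →
      Summable (‖expSeriesTerm P lam (v (Fin.last n)) ·‖) ∧
        ∑' k, expSeriesTerm P lam (v (Fin.last n)) k =
          ∏ j : Fin n, (1 + lam * (Z (v j.succ) - Z (v j.castSucc)) / 2) /
            (1 - lam * (Z (v j.succ) - Z (v j.castSucc)) / 2)
  | 0, v, hv0, _, _ => by
    rw [show Fin.last 0 = 0 from rfl, hv0, expSeriesTerm_eq_ite (hP0 O) hPO]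
    refine ⟨(hasSum_ite_eq 0 (1 : ℝ)).summable.congr fun k => ?_, by simp [tsum_ite_eq]⟩
    split_ifs with hk <;> simp [hk]
  | n + 1, v, hv0, hadj, hw => by
    obtain ⟨hA, htsum⟩ := summable_norm_expSeriesTerm_and_tsum_eq_prod hP0 hPO hPrec n
      (fun i => v i.castSucc) hv0 (fun j => hadj j.castSucc) (fun j => hw j.castSucc)
    rw [Fin.prod_univ_castSucc]
    simp only [Fin.succ_castSucc]
    rw [← htsum, ← Fin.succ_last]
    exact summable_norm_and_tsum_eq_of_succ_eq_add_mul_add (hw (Fin.last n)) hA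
      (by simp [expSeriesTerm, hP0])
      fun k => expSeriesTerm_succ (hPrec k _ _ (hadj (Fin.last n))) lam

end DiscreteExponential

open Complex

theorem discrete_exponential_series_eq_rational_product_general
    {V : Type*} (G : SimpleGraph V)
    (O : V) (δ : ℝ) (hδ : 0 < δ)
    (Z : V → ℂ)
    (hZ : ∀ x y : V, G.Adj x y → ‖Z y - Z x‖ = δ)
    (P : ℕ → V → ℂ)
    (hP0 : ∀ v : V, P 0 v = 1)
    (hPO : ∀ k : ℕ, 1 ≤ k → P k O = 0)
    (hPrec : ∀ k : ℕ, 1 ≤ k → ∀ x y : V, G.Adj x y →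
      P k y = P k x + (k : ℂ) * (P (k - 1) x + P (k - 1) y) * (Z y - Z x) / 2)
    (lam : ℂ) (hlam : ‖lam‖ < 2 / δ)
    (x : V) (n : ℕ) (v : Fin (n + 1) → V)
    (hv0 : v 0 = O) (hvn : v (Fin.last n) = x)
    (hadj : ∀ j : Fin n, G.Adj (v j.castSucc) (v j.succ)) :
    (∀ j : Fin n, 1 - lam * (Z (v j.succ) - Z (v j.castSucc)) / 2 ≠ 0) ∧
    (∑' k : ℕ, lam ^ k * P k x / (Nat.factorial k : ℂ)) =
      ∏ j : Fin n,
        (1 + lam * (Z (v j.succ) - Z (v j.castSucc)) / 2) /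
        (1 - lam * (Z (v j.succ) - Z (v j.castSucc)) / 2) := by
  have hw (j : Fin n) : ‖lam * (Z (v j.succ) - Z (v j.castSucc)) / 2‖ < 1 := by
    rw [norm_div, norm_mul, hZ _ _ (hadj j), Complex.norm_two]
    linarith [(lt_div_iff₀ hδ).mp hlam]
  refine ⟨fun j => one_sub_ne_zero_of_norm_lt_one (hw j), ?_⟩
  subst hvn
  exact (summable_norm_expSeriesTerm_and_tsum_eq_prod G hP0 (fun k => hPO (k + 1) le_add_self)
    (fun k x y h => by simpa using hPrec (k + 1) le_add_self x y h) n v hv0 hadj hw).2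

theorem discrete_exponential_series_eq_rational_product
    {V : Type*} (G : SimpleGraph V) (hG : G.Connected)
    (O : V) (δ : ℝ) (hδ : 0 < δ)
    (Z : V → ℂ) (hZO : Z O = 0)
    (hZ : ∀ x y : V, G.Adj x y → ‖Z y - Z x‖ = δ)
    (P : ℕ → V → ℂ)
    (hP0 : ∀ v : V, P 0 v = 1)
    (hPO : ∀ k : ℕ, 1 ≤ k → P k O = 0)
    (hPrec : ∀ k : ℕ, 1 ≤ k → ∀ x y : V, G.Adj x y →
      P k y = P k x + (k : ℂ) * (P (k - 1) x + P (k - 1) y) * (Z y - Z x) / 2)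
    (lam : ℂ) (hlam : ‖lam‖ < 2 / δ)
    (x : V) (n : ℕ) (v : Fin (n + 1) → V)
    (hv0 : v 0 = O) (hvn : v (Fin.last n) = x)
    (hadj : ∀ j : Fin n, G.Adj (v j.castSucc) (v j.succ)) :
    (∀ j : Fin n, 1 - lam * (Z (v j.succ) - Z (v j.castSucc)) / 2 ≠ 0) ∧
    (∑' k : ℕ, lam ^ k * P k x / (Nat.factorial k : ℂ)) =
      ∏ j : Fin n,
        (1 + lam * (Z (v j.succ) - Z (v j.castSucc)) / 2) /
        (1 - lam * (Z (v j.succ) - Z (v j.castSucc)) / 2) :=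
  discrete_exponential_series_eq_rational_product_general G O δ hδ Z hZ P hP0 hPO hPrec lam hlam x n
    v hv0 hvn hadj
end

section
/- Let δ > 0, let n be a natural number, let θ : Fin n → ℝ be a list of angles, and let λ be a nonzero complex number such that for every k, (λδ/2)·exp(i θ_k) ≠ 1 and conj(λδ/2) ≠ exp(i θ_k). Then conj( Π_{k} (1 + (λδ/2)·exp(i θ_k)) / (1 − (λδ/2)·exp(i θ_k)) ) = (−1)^n · Π_{k} (1 + (2/(δ·conj λ))·exp(i θ_k)) / (1 − (2/(δ·conj λ))·exp(i θ_k)). In other words, the duality f ↦ f† = ε·conj(f), where ε = (−1)^n is the biconstant, maps the discrete exponential with parameter λ to the discrete exponential with parameter 4/(δ²·conj λ): exp(:λ:)† = exp(:4/(δ² conj λ):). -/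
/-!
Each factor of the discrete exponential is the Cayley transform `(1 + w) / (1 - w)` of
`w = (λδ/2) e^{iθ}`. Conjugation sends `w` to `conj (λδ/2) · e^{-iθ}`, which is the inverse of
`w' = (2 / (δ conj λ)) e^{iθ}` because `e^{iθ}` lies on the unit circle, and the Cayley transform
changes sign under `w ↦ w⁻¹`. Hence every factor contributes a sign `-1`.
-/

open Complex ComplexConjugate

namespace DiscreteExponential

section Field

variable {K : Type*} [Field K]

def cayley (w : K) : K := (1 + w) / (1 - w)

theorem map_cayley {L : Type*} [Field L] (f : K →+* L) (w : K) :
    f (cayley w) = cayley (f w) := by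
  simp [cayley, map_div₀]

theorem cayley_inv {w : K} (hw : w ≠ 0) : cayley w⁻¹ = -cayley w := by
  calc cayley w⁻¹ = (w * (1 + w⁻¹)) / (w * (1 - w⁻¹)) := (mul_div_mul_left _ _ hw).symm
    _ = (w + 1) / (w - 1) := by rw [mul_add, mul_sub, mul_one, mul_inv_cancel₀ hw]
    _ = -cayley w := by rw [cayley, ← neg_sub w 1, div_neg, neg_neg, add_comm]

end Field

theorem conj_cayley_mul_of_norm_eq_one {a z : ℂ} (ha : a ≠ 0) (hz : ‖z‖ = 1) :
    conj (cayley (a * z)) = -cayley ((conj a)⁻¹ * z) := by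
  have hz0 : z ≠ 0 := norm_ne_zero_iff.mp (hz ▸ one_ne_zero)
  have hconj : conj (a * z) = ((conj a)⁻¹ * z)⁻¹ := by
    rw [map_mul, ← inv_eq_conj hz, mul_inv, inv_inv]
  rw [map_cayley, hconj, cayley_inv (mul_ne_zero (inv_ne_zero (by simpa using ha)) hz0)]

end DiscreteExponential

open DiscreteExponential in
theorem discrete_exponential_duality_general
    (δ : ℝ) (hδ : 0 < δ) (n : ℕ) (θ : Fin n → ℝ)
    (lam : ℂ) (hlam : lam ≠ 0) :
    (starRingEnd ℂ) (∏ k : Fin n,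
        (1 + (lam * δ / 2) * Complex.exp (Complex.I * θ k)) /
        (1 - (lam * δ / 2) * Complex.exp (Complex.I * θ k))) =
      (-1 : ℂ) ^ n * ∏ k : Fin n,
        (1 + (2 / (δ * (starRingEnd ℂ) lam)) * Complex.exp (Complex.I * θ k)) /
        (1 - (2 / (δ * (starRingEnd ℂ) lam)) * Complex.exp (Complex.I * θ k)) := by
  have ha : lam * δ / 2 ≠ 0 :=
    div_ne_zero (mul_ne_zero hlam (ofReal_ne_zero.mpr hδ.ne')) two_ne_zero
  have hb : (conj (lam * δ / 2))⁻¹ = 2 / (δ * conj lam) := by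
    simp [map_ofNat, mul_comm]
  calc conj (∏ k : Fin n, cayley (lam * δ / 2 * exp (I * θ k)))
      = ∏ k : Fin n, -cayley (2 / (δ * conj lam) * exp (I * θ k)) := by
        rw [map_prod, ← hb]
        exact Finset.prod_congr rfl fun k _ =>
          conj_cayley_mul_of_norm_eq_one ha (norm_exp_I_mul_ofReal (θ k))
    _ = _ := by rw [Finset.prod_neg, Finset.card_univ, Fintype.card_fin]; rfl

theorem discrete_exponential_duality
    (δ : ℝ) (hδ : 0 < δ) (n : ℕ) (θ : Fin n → ℝ)
    (lam : ℂ) (hlam : lam ≠ 0)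
    (h1 : ∀ k : Fin n, (lam * δ / 2) * Complex.exp (Complex.I * θ k) ≠ 1)
    (h2 : ∀ k : Fin n, (starRingEnd ℂ) (lam * δ / 2) ≠ Complex.exp (Complex.I * θ k)) :
    (starRingEnd ℂ) (∏ k : Fin n,
        (1 + (lam * δ / 2) * Complex.exp (Complex.I * θ k)) /
        (1 - (lam * δ / 2) * Complex.exp (Complex.I * θ k))) =
      (-1 : ℂ) ^ n * ∏ k : Fin n,
        (1 + (2 / (δ * (starRingEnd ℂ) lam)) * Complex.exp (Complex.I * θ k)) /
        (1 - (2 / (δ * (starRingEnd ℂ) lam)) * Complex.exp (Complex.I * θ k)) :=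
  discrete_exponential_duality_general δ hδ n θ lam hlam
end

section
/- For every complex number z, the sequence n ↦ ((1 + z/(2n)) / (1 − z/(2n)))^n − exp(z) is O(1/n²) as n → ∞ (asymptotically along the natural numbers). -/
/-!
With `w = z / (2n)` one has `((1 + w) / (1 - w)) ^ n = exp (n (log (1 + w) - log (1 - w)))`, and
`n (log (1 + w) - log (1 - w)) = z + n (log (1 + w) - log (1 - w) - 2w)`. The odd function
`log (1 + w) - log (1 - w)` agrees with `2w` to third order, so the correction term is
`O(n |w| ^ 3) = O(1 / n ^ 2)`, and `exp (z + u) - exp z = O(u)` as `u → 0`.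
-/

open Complex Filter Asymptotics Topology

namespace Complex

lemma log_one_add_sub_log_one_sub_sub_two_mul_isBigO :
    (fun w : ℂ => log (1 + w) - log (1 - w) - 2 * w) =O[𝓝 0] fun w => w ^ 3 := by
  have h : (fun w : ℂ => log (1 + w) - logTaylor 3 w) =O[𝓝 0] fun w => w ^ 3 :=
    log_sub_logTaylor_isBigO 2
  have hneg : (fun w : ℂ => log (1 + -w) - logTaylor 3 (-w)) =O[𝓝 0] fun w => w ^ 3 :=
    (h.comp_tendsto (by simpa using tendsto_neg (0 : ℂ))).trans
      (isBigO_of_le _ fun w => by simp [norm_pow])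
  refine (h.sub hneg).congr_left fun w => ?_
  simp only [logTaylor, Finset.sum_range_succ, Finset.sum_range_zero]
  rw [← sub_eq_add_neg]
  push_cast
  ring

lemma exp_add_sub_exp_isBigO {α : Type*} {l : Filter α} {u : α → ℂ} {g : α → ℝ}
    (c : ℂ) (hu : u =O[l] g) (hg : Tendsto g l (𝓝 0)) :
    (fun a => exp (c + u a) - exp c) =O[l] g := by
  have hexp : (fun w => exp w - 1) =O[𝓝 0] fun w => w := by
    simpa using (hasDerivAt_exp 0).isBigO_sub
  have := ((hexp.comp_tendsto (hu.trans_tendsto hg)).trans hu).const_mul_left (exp c)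
  simpa [exp_add, mul_sub] using this

lemma tendsto_div_two_mul_natCast_atTop (z : ℂ) :
    Tendsto (fun n : ℕ => z / (2 * n)) atTop (𝓝 0) := by
  simpa only [div_div] using tendsto_const_div_atTop_nhds_zero_nat (z / 2)

lemma natCast_mul_log_one_add_sub_log_one_sub_isBigO (z : ℂ) :
    (fun n : ℕ => (n : ℂ) *
        (log (1 + z / (2 * n)) - log (1 - z / (2 * n)) - 2 * (z / (2 * n))))
      =O[atTop] fun n : ℕ => (1 : ℝ) / (n : ℝ) ^ 2 := by
  have hcubic := (isBigO_refl (fun n : ℕ => (n : ℂ)) atTop).mul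
    (log_one_add_sub_log_one_sub_sub_two_mul_isBigO.comp_tendsto
      (tendsto_div_two_mul_natCast_atTop z))
  refine hcubic.trans (IsBigO.of_bound (‖z‖ ^ 3 / 8) (Eventually.of_forall fun n => ?_))
  rcases eq_or_ne n 0 with rfl | hn
  · simp
  · simp only [Function.comp_apply, div_pow, norm_mul, RCLike.norm_natCast,
      norm_div, norm_pow, norm_ofNat, one_div, norm_inv]
    field_simp
    norm_num

end Complex

theorem pade_exponential_approximation (z : ℂ) :
    (fun n : ℕ => ((1 + z / (2 * n)) / (1 - z / (2 * n))) ^ n - Complex.exp z)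
      =O[atTop] (fun n : ℕ => (1 : ℝ) / (n : ℝ) ^ 2) := by
  have hw := tendsto_div_two_mul_natCast_atTop z
  have hp : Tendsto (fun n : ℕ => 1 + z / (2 * n)) atTop (𝓝 1) := by
    simpa using hw.const_add 1
  have hm : Tendsto (fun n : ℕ => 1 - z / (2 * n)) atTop (𝓝 1) := by
    simpa using hw.const_sub 1
  have hratio : ∀ᶠ n : ℕ in atTop, ((1 + z / (2 * n)) / (1 - z / (2 * n))) ^ n =
      exp (z + n * (log (1 + z / (2 * n)) - log (1 - z / (2 * n)) - 2 * (z / (2 * n)))) := by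
    filter_upwards [eventually_ne_atTop 0, hp.eventually_ne one_ne_zero,
      hm.eventually_ne one_ne_zero] with n hn hplus hminus
    have hexponent : z + n * (log (1 + z / (2 * n)) - log (1 - z / (2 * n)) - 2 * (z / (2 * n)))
        = n * log (1 + z / (2 * n)) - n * log (1 - z / (2 * n)) := by
      field_simp
      ring
    rw [hexponent, exp_sub, exp_nat_mul, exp_nat_mul, exp_log hplus, exp_log hminus, div_pow]
  have hinvSq : Tendsto (fun n : ℕ => (1 : ℝ) / (n : ℝ) ^ 2) atTop (𝓝 0) := by
    simpa using (tendsto_const_div_atTop_nhds_zero_nat (1 : ℝ)).pow 2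
  have hu := natCast_mul_log_one_add_sub_log_one_sub_isBigO z
  exact (exp_add_sub_exp_isBigO z hu hinvSq).congr' (hratio.mono fun n hn => by simp only [hn])
    EventuallyEq.rfl
end
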